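/- Let N ≥ 1, let I_1, …, I_N be pairwise disjoint nondegenerate closed intervals contained in [-π/8, π/8], and let A_1, …, A_N > 0. Define h = Σ_{i=1}^N A_i·1_{I_i} and H : ℝ → ℝ by H(θ) = ∫_{-π/8}^{π/8} |sin(2(θ - θ'))| h(θ') dθ'. If H takes the same value at all 2N endpoints of the intervals I_1, …, I_N, then N = 1. -/

import Mathlib

/-!
Away from the interiors of the sectors, `H` agrees on the gap after the first `k` sectors (in
increasing order) with a wave `θ ↦ P cos 2θ + Q sin 2θ`; crossing the sector `[α, β]` of strength
`W` adds `W (cos 2(θ - β) - cos 2(θ - α))`, and after the last sector the wave is minus the first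
one, i.e. the first one shifted by `π/2`. A wave taking the same value `c` at two points at
distance `L ∈ (0, π)` has opposite slopes `±t` there, with `t cos L = c sin L`. Crossing a gap
and then a sector flips the slope twice, so the slope at the right end of every sector is the
same `t`. Hence the first gap and the wrap-around gap, from the last sector to the first one
shifted by `π/2`, have lengths with the same tangent `t / c` (and `c = H(α₀) > 0`). With two or
more sectors in `[-π/8, π/8]` the first gap is shorter than `π/4` and the wrap-around gap at
least `π/4`, a contradiction.
-/

open Real MeasureTheory intervalIntegral

noncomputable def wave (x : ℝ) : ℝ × ℝ →ₗ[ℝ] ℝ :=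
  cos (2 * x) • LinearMap.fst ℝ ℝ ℝ + sin (2 * x) • LinearMap.snd ℝ ℝ ℝ

/-- Half the derivative of `wave · v` at `x`. -/
noncomputable def waveSlope (x : ℝ) : ℝ × ℝ →ₗ[ℝ] ℝ :=
  cos (2 * x) • LinearMap.snd ℝ ℝ ℝ - sin (2 * x) • LinearMap.fst ℝ ℝ ℝ

noncomputable def angleVec (y : ℝ) : ℝ × ℝ := (cos (2 * y), sin (2 * y))

lemma wave_apply (x : ℝ) (v : ℝ × ℝ) : wave x v = cos (2 * x) * v.1 + sin (2 * x) * v.2 :=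
  rfl

lemma waveSlope_apply (x : ℝ) (v : ℝ × ℝ) :
    waveSlope x v = cos (2 * x) * v.2 - sin (2 * x) * v.1 :=
  rfl

lemma wave_add (x s : ℝ) (v : ℝ × ℝ) :
    wave (x + s) v = wave x v * cos (2 * s) + waveSlope x v * sin (2 * s) := by
  simp only [wave_apply, waveSlope_apply, mul_add, cos_add, sin_add]; ring

lemma waveSlope_add (x s : ℝ) (v : ℝ × ℝ) :
    waveSlope (x + s) v = waveSlope x v * cos (2 * s) - wave x v * sin (2 * s) := by
  simp only [wave_apply, waveSlope_apply, mul_add, cos_add, sin_add]; ring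

lemma waveSlope_mul_cos_eq_of_wave_eq {x y : ℝ} {v : ℝ × ℝ} (h₀ : 0 < y - x) (h₁ : y - x < π)
    (h : wave x v = wave y v) : waveSlope x v * cos (y - x) = wave x v * sin (y - x) := by
  have hs : 0 < sin (y - x) := sin_pos_of_pos_of_lt_pi h₀ h₁
  rw [show y = x + (y - x) by ring, wave_add, sin_two_mul, cos_two_mul] at h
  have h' := sin_sq_add_cos_sq (y - x)
  apply mul_left_cancel₀ (mul_ne_zero two_ne_zero hs.ne')
  linear_combination -h - 2 * wave x v * h'

lemma waveSlope_eq_neg_of_wave_eq {x y : ℝ} {v : ℝ × ℝ} (h₀ : 0 < y - x) (h₁ : y - x < π)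
    (h : wave x v = wave y v) : waveSlope y v = -waveSlope x v := by
  have key := waveSlope_mul_cos_eq_of_wave_eq h₀ h₁ h
  rw [show y = x + (y - x) by ring, waveSlope_add, sin_two_mul, cos_two_mul]
  linear_combination 2 * cos (y - x) * key

lemma wave_angleVec (x y : ℝ) : wave x (angleVec y) = cos (2 * (x - y)) := by
  simp only [angleVec, wave_apply, mul_sub, cos_sub]

lemma wave_angleVec_self (x : ℝ) : wave x (angleVec x) = 1 := by
  rw [wave_angleVec, sub_self, mul_zero, cos_zero]

lemma waveSlope_angleVec_self (x : ℝ) : waveSlope x (angleVec x) = 0 := by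
  simp only [angleVec, waveSlope_apply]; ring

lemma wave_add_pi_div_two (x : ℝ) (v : ℝ × ℝ) : wave (x + π / 2) v = -wave x v := by
  rw [wave_apply, wave_apply, mul_add, mul_div_cancel₀ π two_ne_zero, cos_add_pi, sin_add_pi]
  ring

/-- On the sector `[y, z]` the profile is `W + wave · (v - W • angleVec y)`, a wave with equal
values at `y` and `z`, so the slope flips there as well as across the gap `[x, y]`. -/
lemma waveSlope_eq_across_sector {v w : ℝ × ℝ} {x y z W c : ℝ}
    (hxy₀ : 0 < y - x) (hxy₁ : y - x < π) (hyz₀ : 0 < z - y) (hyz₁ : z - y < π)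
    (hstep : w = v + W • (angleVec z - angleVec y))
    (hx : wave x v = c) (hy : wave y v = c) (hz : wave z w = c) :
    waveSlope z w = waveSlope x v := by
  have hu : v - W • angleVec y = w - W • angleVec z := by rw [hstep]; module
  have hwy : wave y (v - W • angleVec y) = c - W := by
    rw [map_sub, map_smul, wave_angleVec_self, hy, smul_eq_mul, mul_one]
  have hwz : wave z (w - W • angleVec z) = c - W := by
    rw [map_sub, map_smul, wave_angleVec_self, hz, smul_eq_mul, mul_one]
  have hsector := waveSlope_eq_neg_of_wave_eq hyz₀ hyz₁ (by rw [hwy, hu, hwz])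
  calc waveSlope z w = waveSlope z (w - W • angleVec z) := by
        rw [map_sub, map_smul, waveSlope_angleVec_self, smul_zero, sub_zero]
    _ = waveSlope z (v - W • angleVec y) := by rw [hu]
    _ = -waveSlope y (v - W • angleVec y) := hsector
    _ = -waveSlope y v := by rw [map_sub, map_smul, waveSlope_angleVec_self, smul_zero, sub_zero]
    _ = waveSlope x v := by rw [waveSlope_eq_neg_of_wave_eq hxy₀ hxy₁ (hx.trans hy.symm), neg_neg]

theorem false_of_constant_wave_chain {n : ℕ} (α β W : Fin (n + 2) → ℝ) (v : ℕ → ℝ × ℝ) (c : ℝ)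
    (hc : c ≠ 0) (hαβ : ∀ j, α j < β j) (hgap : ∀ i j, i < j → β i < α j)
    (hα_ge : ∀ j, -(π / 8) ≤ α j) (hβ_le : ∀ j, β j ≤ π / 8)
    (hstep : ∀ j : Fin (n + 2), v (j + 1) = v j + W j • (angleVec (β j) - angleVec (α j)))
    (hwrap : v 0 = -v (n + 2))
    (hα : ∀ j : Fin (n + 2), wave (α j) (v j) = c)
    (hβ : ∀ j : Fin (n + 2), wave (β j) (v (j + 1)) = c) : False := by
  have hslope : ∀ j : Fin (n + 2), waveSlope (β j) (v (j + 1)) = waveSlope (β 0) (v 1) := by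
    intro j
    induction j using Fin.induction with
    | zero => rfl
    | succ i ih =>
      rw [← ih]
      have hx := hβ i.castSucc
      have hy := hα i.succ
      have hz := hβ i.succ
      have hs := hstep i.succ
      simp only [Fin.val_castSucc, Fin.val_succ] at hx hy hz hs ih ⊢
      have hgap_i := hgap _ _ (Fin.castSucc_lt_succ (i := i))
      refine waveSlope_eq_across_sector ?_ ?_ ?_ ?_ hs hx hy hz
      all_goals linarith [hα_ge i.castSucc, hα_ge i.succ, hαβ i.castSucc, hαβ i.succ, hβ_le i.succ,
        pi_pos]
  set last := Fin.last (n + 1)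
  have h01 := hgap 0 1 Fin.zero_lt_one
  have h0last := hgap 0 last Fin.last_pos
  have hβ0 : wave (β 0) (v 1) = c := by simpa using hβ 0
  have hβlast : wave (β last) (v (n + 2)) = c := hβ last
  have hα1 : wave (α 1) (v 1) = c := by simpa using hα 1
  have hwrapped : wave (α 0 + π / 2) (v (n + 2)) = c := by
    rw [wave_add_pi_div_two, ← map_neg, ← hwrap]; simpa using hα 0
  have hfirst := waveSlope_mul_cos_eq_of_wave_eq (by linarith)
    (by linarith [hα_ge 0, hαβ 1, hβ_le 1, hαβ 0, pi_pos]) (hβ0.trans hα1.symm)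
  have hlast := waveSlope_mul_cos_eq_of_wave_eq (by linarith [hαβ 0, hβ_le last, hα_ge 0, pi_pos])
    (by linarith [hαβ 0, hαβ last, pi_pos]) (hβlast.trans hwrapped.symm)
  rw [hβ0] at hfirst
  rw [hβlast, show v (n + 2) = v (last + 1) from rfl, hslope last] at hlast
  have hsin : c * sin ((α 0 + π / 2 - β last) - (α 1 - β 0)) = 0 := by
    rw [sin_sub]
    linear_combination cos (α 0 + π / 2 - β last) * hfirst - cos (α 1 - β 0) * hlast
  refine mul_ne_zero hc (sin_pos_of_pos_of_lt_pi ?_ ?_).ne' hsin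
  all_goals linarith [hα_ge 0, hαβ 0, hαβ 1, hβ_le 1, hβ_le last, hαβ last, pi_pos]

lemma integral_sin_two_mul_sub (x p q : ℝ) :
    ∫ t in p..q, sin (2 * (x - t)) = (cos (2 * (x - q)) - cos (2 * (x - p))) / 2 := by
  simp only [mul_sub]
  rw [integral_comp_sub_mul (f := sin) two_ne_zero, integral_sin]
  simp; ring

lemma integral_abs_sin_of_le (x p q : ℝ) (hpq : p ≤ q) (hqx : q ≤ x) (hxp : x - p ≤ π / 2) :
    ∫ t in p..q, |sin (2 * (x - t))| = wave x (angleVec q - angleVec p) / 2 := by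
  rw [map_sub, wave_angleVec, wave_angleVec, ← integral_sin_two_mul_sub]
  refine integral_congr fun t ht => abs_of_nonneg (sin_nonneg_of_nonneg_of_le_pi ?_ ?_)
  all_goals rw [Set.uIcc_of_le hpq] at ht; linarith [ht.1, ht.2]

lemma integral_abs_sin_of_ge (x p q : ℝ) (hpq : p ≤ q) (hxp : x ≤ p) (hqx : q - x ≤ π / 2) :
    ∫ t in p..q, |sin (2 * (x - t))| = -(wave x (angleVec q - angleVec p) / 2) := by
  have hneg : ∀ t ∈ Set.uIcc p q, |sin (2 * (x - t))| = -sin (2 * (x - t)) := by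
    intro t ht
    rw [Set.uIcc_of_le hpq] at ht
    exact abs_of_nonpos
      (sin_nonpos_of_nonpos_of_neg_pi_le (by linarith [ht.1]) (by linarith [ht.2]))
  rw [integral_congr hneg, intervalIntegral.integral_neg, integral_sin_two_mul_sub, map_sub,
    wave_angleVec, wave_angleVec]

lemma integral_indicator_Icc {f : ℝ → ℝ} {l u p q : ℝ} (hlp : l ≤ p) (hpq : p ≤ q) (hqu : q ≤ u) :
    ∫ t in l..u, (Set.Icc p q).indicator f t = ∫ t in p..q, f t := by
  have hae : (Set.Icc p q).indicator f =ᵐ[volume] (Set.Ioc p q).indicator f :=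
    indicator_ae_eq_of_ae_eq_set Ioc_ae_eq_Icc.symm
  rw [integral_congr_ae (hae.mono fun t ht _ => ht), integral_of_le (hlp.trans (hpq.trans hqu)),
    integral_of_le hpq, setIntegral_indicator measurableSet_Ioc,
    Set.inter_eq_right.mpr (Set.Ioc_subset_Ioc hlp hqu)]

lemma integral_mul_sum_indicator_Icc {N : ℕ} {f : ℝ → ℝ} {l u : ℝ}
    (hf : IntervalIntegrable f volume l u) (a b A : Fin N → ℝ) (hab : ∀ i, a i ≤ b i)
    (hsub : ∀ i, Set.Icc (a i) (b i) ⊆ Set.Icc l u) :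
    ∫ t in l..u, f t * ∑ i, A i * (Set.Icc (a i) (b i)).indicator (fun _ => (1 : ℝ)) t =
      ∑ i, A i * ∫ t in a i..b i, f t := by
  have hl : ∀ i, l ≤ a i := fun i => (hsub i ⟨le_rfl, hab i⟩).1
  have hu : ∀ i, b i ≤ u := fun i => (hsub i ⟨hab i, le_rfl⟩).2
  have hpt : ∀ t, f t * ∑ i, A i * (Set.Icc (a i) (b i)).indicator (fun _ => (1 : ℝ)) t =
      ∑ i, A i * (Set.Icc (a i) (b i)).indicator f t := by
    intro t
    simp only [Finset.mul_sum, Set.indicator_apply]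
    refine Finset.sum_congr rfl fun i _ => ?_
    split_ifs <;> ring
  simp only [hpt]
  have hint : ∀ i, IntervalIntegrable ((Set.Icc (a i) (b i)).indicator f) volume l u := fun i =>
    intervalIntegrable_iff.mpr ((intervalIntegrable_iff.mp hf).indicator measurableSet_Icc)
  rw [intervalIntegral.integral_finsetSum fun i _ => (hint i).const_mul (A i)]
  simp only [intervalIntegral.integral_const_mul, integral_indicator_Icc (hl _) (hab _) (hu _)]

noncomputable def sectorProfile {N : ℕ} (a b A : Fin N → ℝ) (x : ℝ) : ℝ :=
  ∑ i, A i * ∫ t in a i..b i, |sin (2 * (x - t))|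

noncomputable def gapCoeff {N : ℕ} (a b A : Fin N → ℝ) (k : ℕ) : ℝ × ℝ :=
  ∑ i : Fin N, (if (i : ℕ) < k then A i / 2 else -(A i / 2)) • (angleVec (b i) - angleVec (a i))

lemma sectorProfile_comp_perm {N : ℕ} (a b A : Fin N → ℝ) (σ : Equiv.Perm (Fin N)) :
    sectorProfile (a ∘ σ) (b ∘ σ) (A ∘ σ) = sectorProfile a b A :=
  funext fun x => Equiv.sum_comp σ fun i => A i * ∫ t in a i..b i, |sin (2 * (x - t))|

lemma sectorProfile_eq_wave {N : ℕ} {a b A : Fin N → ℝ} {x : ℝ} (k : ℕ) (hab : ∀ i, a i ≤ b i)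
    (hleft : ∀ i : Fin N, (i : ℕ) < k → b i ≤ x) (hright : ∀ i : Fin N, k ≤ (i : ℕ) → x ≤ a i)
    (ha : ∀ i, x - π / 2 ≤ a i) (hb : ∀ i, b i ≤ x + π / 2) :
    sectorProfile a b A x = wave x (gapCoeff a b A k) := by
  rw [sectorProfile, gapCoeff, map_sum]
  refine Finset.sum_congr rfl fun i _ => ?_
  rw [map_smul, smul_eq_mul]
  split_ifs with hik
  · rw [integral_abs_sin_of_le x _ _ (hab i) (hleft i hik) (by linarith [ha i])]; ring
  · rw [integral_abs_sin_of_ge x _ _ (hab i) (hright i (not_lt.mp hik)) (by linarith [hb i])]; ring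

lemma gapCoeff_succ {N : ℕ} (a b A : Fin N → ℝ) (j : Fin N) :
    gapCoeff a b A (j + 1) = gapCoeff a b A j + A j • (angleVec (b j) - angleVec (a j)) := by
  rw [← sub_eq_iff_eq_add', gapCoeff, gapCoeff, ← Finset.sum_sub_distrib,
    Finset.sum_eq_single_of_mem j (Finset.mem_univ j)]
  · rw [← sub_smul, if_pos (Nat.lt_succ_self _), if_neg (lt_irrefl _), sub_neg_eq_add, add_halves]
  · intro i _ hij
    have : (i : ℕ) < j + 1 ↔ (i : ℕ) < j := by
      have := Fin.val_ne_of_ne hij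
      omega
    simp only [this, sub_self]

lemma gapCoeff_zero {N : ℕ} (a b A : Fin N → ℝ) : gapCoeff a b A 0 = -gapCoeff a b A N := by
  simp [gapCoeff, ← Finset.sum_neg_distrib]

lemma sectorProfile_pos {N : ℕ} [NeZero N] {a b A : Fin N → ℝ} {x : ℝ} (hA : ∀ i, 0 < A i)
    (hab : ∀ i, a i < b i) (ha : ∀ i, x ≤ a i) (hb : ∀ i, b i ≤ x + π / 2) :
    0 < sectorProfile a b A x := by
  refine Finset.sum_pos (fun i _ => mul_pos (hA i) ?_) Finset.univ_nonempty
  refine intervalIntegral_pos_of_pos_on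
    ((by fun_prop : Continuous fun t => |sin (2 * (x - t))|).intervalIntegrable _ _)
    (fun t ht => abs_pos.mpr (sin_neg_of_neg_of_neg_pi_lt ?_ ?_).ne) (hab i)
  all_goals linarith [ht.1, ht.2, ha i, hb i]

lemma lt_of_disjoint_Icc {α : Type*} [LinearOrder α] {a₁ b₁ a₂ b₂ : α} (ha : a₁ ≤ a₂)
    (hab : a₂ ≤ b₂) (hd : Disjoint (Set.Icc a₁ b₁) (Set.Icc a₂ b₂)) : b₁ < a₂ := by
  by_contra! h
  exact Set.disjoint_left.mp hd ⟨ha, h⟩ ⟨le_rfl, hab⟩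

theorem false_of_sectorProfile_const {n : ℕ} (α β W : Fin (n + 2) → ℝ) (hW : ∀ j, 0 < W j)
    (hαβ : ∀ j, α j < β j) (hgap : ∀ i j, i < j → β i < α j)
    (hα_ge : ∀ j, -(π / 8) ≤ α j) (hβ_le : ∀ j, β j ≤ π / 8) (c : ℝ)
    (hc : ∀ j, sectorProfile α β W (α j) = c ∧ sectorProfile α β W (β j) = c) : False := by
  have hα_mono : ∀ i j, i ≤ j → α i ≤ α j := fun i j hij =>
    hij.eq_or_lt.elim (fun h => h ▸ le_rfl) fun h => ((hαβ i).trans (hgap i j h)).le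
  have hβ_mono : ∀ i j, i ≤ j → β i ≤ β j := fun i j hij =>
    hij.eq_or_lt.elim (fun h => h ▸ le_rfl) fun h => ((hgap i j h).trans (hαβ j)).le
  have hwave : ∀ (x : ℝ) (k : ℕ), -(π / 8) ≤ x → x ≤ π / 8 →
      (∀ i : Fin (n + 2), (i : ℕ) < k → β i ≤ x) → (∀ i : Fin (n + 2), k ≤ (i : ℕ) → x ≤ α i) →
      sectorProfile α β W x = wave x (gapCoeff α β W k) := fun x k hx₁ hx₂ hl hr =>
    sectorProfile_eq_wave k (fun i => (hαβ i).le) hl hr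
      (fun i => by linarith [hα_ge i, pi_pos]) (fun i => by linarith [hβ_le i, pi_pos])
  refine false_of_constant_wave_chain α β W (gapCoeff α β W) c ?_ hαβ hgap hα_ge hβ_le
    (gapCoeff_succ α β W) (gapCoeff_zero α β W) (fun j => ?_) (fun j => ?_)
  · rw [← (hc 0).1]
    refine (sectorProfile_pos hW hαβ (fun i => hα_mono 0 i (Fin.zero_le i)) fun i => ?_).ne'
    linarith [hα_ge 0, hβ_le i, pi_pos]
  · rw [← hwave (α j) j (hα_ge j) (by linarith [hαβ j, hβ_le j]) (fun i h => (hgap i j h).le)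
      (fun i h => hα_mono j i h), (hc j).1]
  · rw [← hwave (β j) (j + 1) (by linarith [hαβ j, hα_ge j]) (hβ_le j)
      (fun i h => hβ_mono i j (Fin.le_def.mpr (by omega)))
      (fun i h => (hgap j i (Fin.lt_def.mpr (by omega))).le), (hc j).2]

/-- weighted classification of rotating sector patches supported in an
angular interval of length `π/4`: with `h = Σ A_i · 1_{I_i}` and
`H(θ) = ∫_{-π/8}^{π/8} |sin(2(θ-θ'))| h(θ') dθ'`, if `H` takes the same value at all
`2N` endpoints, then `N = 1`. -/
theorem rotating_sector_classification_weighted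
    (N : ℕ) (hN : 1 ≤ N) (a b : Fin N → ℝ) (A : Fin N → ℝ)
    (hA : ∀ i, 0 < A i)
    (hab : ∀ i, a i < b i)
    (hsub : ∀ i, Set.Icc (a i) (b i) ⊆ Set.Icc (-(π / 8)) (π / 8))
    (hdisj : Pairwise (Function.onFun Disjoint fun i => Set.Icc (a i) (b i)))
    (h : ℝ → ℝ)
    (hdef : ∀ x : ℝ, h x = ∑ i : Fin N,
      A i * Set.indicator (Set.Icc (a i) (b i)) (fun _ => (1 : ℝ)) x)
    (H : ℝ → ℝ)
    (hH : ∀ θ : ℝ, H θ =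
      ∫ θ' in (-(π / 8))..(π / 8), |Real.sin (2 * (θ - θ'))| * h θ')
    (c : ℝ) (hc : ∀ i, H (a i) = c ∧ H (b i) = c) :
    N = 1 := by
  by_contra hN1
  obtain ⟨n, rfl⟩ : ∃ n, N = n + 2 := ⟨N - 2, by omega⟩
  have hprofile : ∀ θ, H θ = sectorProfile a b A θ := fun θ => by
    simp only [hH, hdef]
    exact integral_mul_sum_indicator_Icc
      ((by fun_prop : Continuous fun t => |sin (2 * (θ - t))|).intervalIntegrable _ _) a b A
      (fun i => (hab i).le) hsub
  set σ := Tuple.sort a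
  have hmono : Monotone (a ∘ σ) := Tuple.monotone_sort a
  refine false_of_sectorProfile_const (a ∘ σ) (b ∘ σ) (A ∘ σ) (fun j => hA _) (fun j => hab _)
    (fun i j hij => lt_of_disjoint_Icc (hmono hij.le) (hab _).le (hdisj (σ.injective.ne hij.ne)))
    (fun j => (hsub _ ⟨le_rfl, (hab _).le⟩).1) (fun j => (hsub _ ⟨(hab _).le, le_rfl⟩).2) c
    fun j => ?_
  rw [sectorProfile_comp_perm, ← hprofile, ← hprofile]
  exact hc (σ j)
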